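/- For X = T/K, the sets of T(t,x)-fixed loops satisfy: (L²X)^{T(t,x)} and (L²X)^{T(t',x')} (with x = x₁t₁+x₂t₂, x' = x₁'t₁'+x₂'t₂') are equal if (x₁,x₂) and (x₁',x₂') lie in the same connected component of exp_{T×T}^{-1}(K×K), and are disjoint otherwise; in particular two such fixed loop spaces intersect nontrivially only if they are equal. -/

import Mathlib

/-!
A closed subgroup `S` of a finite-dimensional real vector space agrees near `0` with its Lie
algebra `Lie(S) = {v | ℝ • v ⊆ S}`: on a complement of `Lie(S)` it has no small nonzero elements,
since their normalised directions would accumulate at a unit vector of `Lie(S)`. So `S ∩ (x + Lie(S))`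
is relatively clopen in `S`, and the connected component of `x ∈ S` is the affine subspace
`x + Lie(S)`.

For `S = exp_{T×T}⁻¹(K × K)`, a fixed loop `s ↦ exp_T(x₁s₁ + x₂s₂)·z` is fixed for `x'` as well iff
`exp_T(s₁(x₁' - x₁) + s₂(x₂' - x₂)) ∈ K` for all `s`, i.e. iff `x' - x ∈ Lie(S)`; and evaluating
at `s = (1, 0), (0, 1)` shows that fixed loops for `x` exist only if `x ∈ S`.
-/

noncomputable section

/-- The circle `𝕋 = ℝ/ℤ`. -/
abbrev 𝕊 : Type := UnitAddCircle

/-- The compact torus of rank `n`. -/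
abbrev Tor (n : ℕ) : Type := Fin n → 𝕊

/-- The exponential map `𝔱 = ℝⁿ → T = (ℝ/ℤ)ⁿ`. -/
def expT {n : ℕ} (x : Fin n → ℝ) : Tor n := fun i => (x i : 𝕊)

/-- The two-parameter homomorphism `(r₁,r₂) ↦ (exp(r₁), exp(r₂), exp_T(x₁r₁ + x₂r₂))`
into `𝕋² × T`. -/
def onePar {n : ℕ} (x₁ x₂ : Fin n → ℝ) (r₁ r₂ : ℝ) : (𝕊 × 𝕊) × Tor n :=
  (((r₁ : 𝕊), (r₂ : 𝕊)), expT (r₁ • x₁ + r₂ • x₂))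

/-- The closed subgroup `T(t,x) ⊆ 𝕋² × T`: the closure of
`{(exp(r₁), exp(r₂), exp_T(x₁r₁ + x₂r₂)) | r₁, r₂ ∈ ℝ}`. -/
def Ttx {n : ℕ} (x₁ x₂ : Fin n → ℝ) : AddSubgroup ((𝕊 × 𝕊) × Tor n) :=
  (AddSubgroup.closure (Set.range fun p : ℝ × ℝ => onePar x₁ x₂ p.1 p.2)).topologicalClosure

/-- The closed subgroup `T(a) = ⟨exp_T(x₁), exp_T(x₂)⟩ ⊆ T`. -/
def Ta {n : ℕ} (x₁ x₂ : Fin n → ℝ) : AddSubgroup (Tor n) :=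
  (AddSubgroup.closure ({expT x₁, expT x₂} : Set (Tor n))).topologicalClosure

/-- The exponential map `𝔱 × 𝔱 → T × T`. -/
def exp2 {n : ℕ} (p : (Fin n → ℝ) × (Fin n → ℝ)) : Tor n × Tor n := (expT p.1, expT p.2)

/-- The fixed loop space `(L²(T/K))^{T(t,x)} = {s ↦ exp_T(x₁s₁ + x₂s₂)·z | z ∈ T/K}`
(automatically empty unless `exp_T(x₁), exp_T(x₂) ∈ K`). -/
def fixedLoops {n : ℕ} (K : AddSubgroup (Tor n)) (x₁ x₂ : Fin n → ℝ) :
    Set ((𝕊 × 𝕊) → Tor n ⧸ K) :=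
  {γ | ∃ z : Tor n ⧸ K, ∀ s₁ s₂ : ℝ,
    γ ((s₁ : 𝕊), (s₂ : 𝕊)) = QuotientAddGroup.mk (expT (s₁ • x₁ + s₂ • x₂)) + z}

open Filter Topology

namespace AddSubgroup

variable {E : Type*} [NormedAddCommGroup E] [NormedSpace ℝ E]

/-- The Lie algebra `Lie(S)` of a closed subgroup `S`. -/
def lieOf (S : AddSubgroup E) : Submodule ℝ E where
  carrier := {v | ∀ t : ℝ, t • v ∈ S}
  add_mem' ha hb t := by rw [smul_add]; exact S.add_mem (ha t) (hb t)
  zero_mem' t := by rw [smul_zero]; exact S.zero_mem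
  smul_mem' c v hv t := by rw [smul_smul]; exact hv (t * c)

variable {S : AddSubgroup E}

theorem mem_of_mem_lieOf {v : E} (hv : v ∈ S.lieOf) : v ∈ S := by
  simpa using hv 1

/-- `t • u` is the limit of the multiples `⌊t / ‖d‖⌋ • d ∈ S`. -/
theorem mem_lieOf_of_tendsto (hS : IsClosed (S : Set E)) {l : Filter E} [l.NeBot]
    (hl : l ≤ 𝓝[(S : Set E) \ {0}] 0) {u : E}
    (hu : Tendsto (fun d => ‖d‖⁻¹ • d) l (𝓝 u)) : u ∈ S.lieOf := by
  intro t
  have hnorm : Tendsto (fun d : E => ‖d‖) l (𝓝 0) :=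
    tendsto_norm_zero.mono_left (hl.trans nhdsWithin_le_nhds)
  have hfract : Tendsto (fun d : E => Int.fract (t / ‖d‖) * ‖d‖) l (𝓝 0) :=
    squeeze_zero (fun d => mul_nonneg (Int.fract_nonneg _) (norm_nonneg d))
      (fun d => mul_le_of_le_one_left (norm_nonneg d) (Int.fract_lt_one _).le) hnorm
  have hscale : Tendsto (fun d : E => t - Int.fract (t / ‖d‖) * ‖d‖) l (𝓝 t) := by
    simpa using tendsto_const_nhds.sub hfract
  have hmem : ∀ᶠ d in l, (t - Int.fract (t / ‖d‖) * ‖d‖) • (‖d‖⁻¹ • d) ∈ S := by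
    filter_upwards [hl self_mem_nhdsWithin] with d ⟨hdS, hd0⟩
    have hd : ‖d‖ ≠ 0 := norm_ne_zero_iff.2 hd0
    have : (t - Int.fract (t / ‖d‖) * ‖d‖) • (‖d‖⁻¹ • d) = ⌊t / ‖d‖⌋ • d := by
      rw [smul_smul, ← Int.cast_smul_eq_zsmul ℝ, Int.fract]
      congr 1
      field_simp
      ring
    rw [this]
    exact S.zsmul_mem hdS _
  exact hS.mem_of_tendsto (hscale.smul hu) hmem

/-- Otherwise the directions `‖d‖⁻¹ • d` of small nonzero `d ∈ S` accumulate at a unit vector,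
which lies in `Lie(S)`. -/
theorem eventually_eq_zero_of_lieOf_eq_bot [ProperSpace E] (hS : IsClosed (S : Set E))
    (h : S.lieOf = ⊥) : ∀ᶠ d in 𝓝 (0 : E), d ∈ S → d = 0 := by
  by_contra hne
  have : (𝓝[(S : Set E) \ {0}] (0 : E)).NeBot := by
    refine ⟨fun hbot => hne ?_⟩
    filter_upwards [eventually_nhdsWithin_iff.1 (eventually_false_iff_eq_bot.2 hbot)]
      with d hd hdS
    by_contra hd0
    exact hd ⟨hdS, hd0⟩
  let U := Ultrafilter.of (𝓝[(S : Set E) \ {0}] (0 : E))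
  have hsphere : ∀ᶠ d in (U : Filter E), ‖d‖⁻¹ • d ∈ Metric.sphere (0 : E) 1 := by
    filter_upwards [Ultrafilter.of_le _ self_mem_nhdsWithin] with d hd
    simpa using norm_smul_inv_norm (𝕜 := ℝ) hd.2
  obtain ⟨u, hu, hlim⟩ := (isCompact_sphere (0 : E) 1).ultrafilter_le_nhds
    (U.map fun d => ‖d‖⁻¹ • d) (le_principal_iff.2 hsphere)
  have hu0 : u = 0 := by
    simpa [h] using mem_lieOf_of_tendsto hS (Ultrafilter.of_le _) hlim
  simp [hu0] at hu

/-- Project along `Lie(S)` onto a complement `C`: `S ∩ C` has trivial Lie algebra, so it is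
discrete. -/
theorem eventually_mem_lieOf [FiniteDimensional ℝ E] (hS : IsClosed (S : Set E)) :
    ∀ᶠ g in 𝓝 (0 : E), g ∈ S → g ∈ S.lieOf := by
  obtain ⟨C, hC⟩ := S.lieOf.exists_isCompl
  let π := C.projection S.lieOf hC.symm
  have hSC : (S ⊓ C.toAddSubgroup).lieOf = ⊥ :=
    (Submodule.eq_bot_iff _).2 fun v hv =>
      Submodule.disjoint_def.1 hC.disjoint v (fun t => (hv t).1) (by simpa using (hv 1).2)
  have hSC_closed : IsClosed ((S ⊓ C.toAddSubgroup : AddSubgroup E) : Set E) :=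
    hS.inter C.closed_of_finiteDimensional
  have hπ : Tendsto π (𝓝 0) (𝓝 0) := by
    simpa using π.continuous_of_finiteDimensional.tendsto 0
  filter_upwards [hπ.eventually (eventually_eq_zero_of_lieOf_eq_bot hSC_closed hSC)] with g hg hgS
  have hL : g - π g ∈ S.lieOf := Submodule.sub_projection_mem hC.symm g
  have hπS : π g ∈ S := by simpa using S.sub_mem hgS (mem_of_mem_lieOf hL)
  simpa [hg ⟨hπS, Submodule.projection_apply_mem _ g⟩] using hL

variable [FiniteDimensional ℝ E]

theorem isClosed_diff_setOf_sub_mem_lieOf (hS : IsClosed (S : Set E)) (x : E) :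
    IsClosed ((S : Set E) \ {y | y - x ∈ S.lieOf}) := by
  refine isClosed_of_closure_subset fun z hz => ?_
  have hzS : z ∈ S := hS.closure_subset_iff.2 (fun _ hy => hy.1) hz
  refine ⟨hzS, fun hzx => ?_⟩
  have hnear : ∀ᶠ w in 𝓝 z, w - z ∈ S → w - z ∈ S.lieOf :=
    (tendsto_sub_nhds_zero_iff.2 tendsto_id).eventually (eventually_mem_lieOf hS)
  obtain ⟨w, ⟨hwS, hwx⟩, hwz⟩ := ((mem_closure_iff_frequently.1 hz).and_eventually hnear).exists
  exact hwx (by simpa using S.lieOf.add_mem (hwz (S.sub_mem hwS hzS)) hzx)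

theorem connectedComponentIn_eq_setOf_sub_mem_lieOf (hS : IsClosed (S : Set E)) {x : E} (hx : x ∈ S) :
    connectedComponentIn S x = {y | y - x ∈ S.lieOf} := by
  refine Set.Subset.antisymm ?_ ?_
  · have hclosed : IsClosed {y | y - x ∈ S.lieOf} :=
      S.lieOf.closed_of_finiteDimensional.preimage (continuous_id.sub continuous_const)
    rcases isPreconnected_iff_subset_of_disjoint_closed.1 isPreconnected_connectedComponentIn _ _
      hclosed (isClosed_diff_setOf_sub_mem_lieOf hS x)
      (fun y hy => (em _).imp_right fun h => ⟨connectedComponentIn_subset _ _ hy, h⟩)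
      (by rw [Set.inter_sdiff_self, Set.inter_empty]) with h | h
    · exact h
    · exact absurd (by simp) (h (mem_connectedComponentIn hx)).2
  · have hconv : Convex ℝ {y | y - x ∈ S.lieOf} := by
      have h := S.lieOf.convex.translate_preimage_right (-x)
      simp only [neg_add_eq_sub] at h
      exact h
    exact hconv.isPreconnected.subset_connectedComponentIn (by simp)
      fun y hy => by simpa using S.add_mem (mem_of_mem_lieOf hy) hx

theorem mem_connectedComponentIn_iff (hS : IsClosed (S : Set E)) {x y : E} :
    y ∈ connectedComponentIn S x ↔ x ∈ S ∧ y - x ∈ S.lieOf := by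
  by_cases hx : x ∈ S
  · simp [connectedComponentIn_eq_setOf_sub_mem_lieOf hS hx, hx]
  · simp [connectedComponentIn_eq_empty hx, hx]

end AddSubgroup

section Torus

def expTHom (n : ℕ) : (Fin n → ℝ) →+ Tor n where
  toFun := expT
  map_zero' := by funext i; simp [expT]
  map_add' a b := by funext i; simp [expT]

variable {n : ℕ}

@[simp]
theorem expT_zero : expT (0 : Fin n → ℝ) = 0 := map_zero (expTHom n)

theorem expT_add (a b : Fin n → ℝ) : expT (a + b) = expT a + expT b := map_add (expTHom n) a b

theorem expT_sub (a b : Fin n → ℝ) : expT (a - b) = expT a - expT b := map_sub (expTHom n) a b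

theorem continuous_expT : Continuous (expT (n := n)) :=
  continuous_pi fun i => continuous_quotient_mk'.comp (continuous_apply i)

def expPreimage (K : AddSubgroup (Tor n)) : AddSubgroup ((Fin n → ℝ) × (Fin n → ℝ)) :=
  (K.prod K).comap ((expTHom n).prodMap (expTHom n))

variable {K : AddSubgroup (Tor n)}

theorem coe_expPreimage : (expPreimage K : Set ((Fin n → ℝ) × (Fin n → ℝ))) = exp2 ⁻¹' (K ×ˢ K) :=
  rfl

theorem isClosed_expPreimage (hK : IsClosed (K : Set (Tor n))) :
    IsClosed (expPreimage K : Set ((Fin n → ℝ) × (Fin n → ℝ))) :=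
  (hK.prod hK).preimage (continuous_expT.prodMap continuous_expT)

theorem mk_expT_eq_mk_expT_iff {a b : Fin n → ℝ} :
    (QuotientAddGroup.mk (expT a) : Tor n ⧸ K) = QuotientAddGroup.mk (expT b) ↔
      expT (b - a) ∈ K := by
  rw [QuotientAddGroup.eq, neg_add_eq_sub, expT_sub]

theorem mem_fixedLoops_iff {x₁ x₂ : Fin n → ℝ} {γ : 𝕊 × 𝕊 → Tor n ⧸ K} :
    γ ∈ fixedLoops K x₁ x₂ ↔
      ∀ s₁ s₂ : ℝ, γ ((s₁ : 𝕊), (s₂ : 𝕊)) = QuotientAddGroup.mk (expT (s₁ • x₁ + s₂ • x₂)) + γ 0 := by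
  refine ⟨fun ⟨z, hz⟩ => ?_, fun h => ⟨γ 0, h⟩⟩
  have hz0 : γ 0 = z := by simpa [Prod.mk_zero_zero] using hz 0 0
  rwa [hz0]

theorem mem_expPreimage_of_mem_fixedLoops {x₁ x₂ : Fin n → ℝ} {γ : 𝕊 × 𝕊 → Tor n ⧸ K}
    (hγ : γ ∈ fixedLoops K x₁ x₂) : (x₁, x₂) ∈ expPreimage K := by
  rw [mem_fixedLoops_iff] at hγ
  have h₁ := hγ 1 0
  have h₂ := hγ 0 1
  simp only [AddCircle.coe_period, QuotientAddGroup.mk_zero, Prod.mk_zero_zero, one_smul, zero_smul,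
    add_zero, zero_add, right_eq_add, QuotientAddGroup.eq_zero_iff] at h₁ h₂
  exact ⟨h₁, h₂⟩

theorem fixedLoops_subset_of_sub_mem_lieOf {x₁ x₂ x₁' x₂' : Fin n → ℝ}
    (h : (x₁', x₂') - (x₁, x₂) ∈ (expPreimage K).lieOf) :
    fixedLoops K x₁ x₂ ⊆ fixedLoops K x₁' x₂' := by
  rintro γ ⟨z, hz⟩
  refine ⟨z, fun s₁ s₂ => ?_⟩
  rw [hz, mk_expT_eq_mk_expT_iff.2]
  rw [show s₁ • x₁' + s₂ • x₂' - (s₁ • x₁ + s₂ • x₂) = s₁ • (x₁' - x₁) + s₂ • (x₂' - x₂) by module,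
    expT_add]
  exact K.add_mem (h s₁).1 (h s₂).2

theorem fixedLoops_eq_of_sub_mem_lieOf {x₁ x₂ x₁' x₂' : Fin n → ℝ}
    (h : (x₁', x₂') - (x₁, x₂) ∈ (expPreimage K).lieOf) :
    fixedLoops K x₁ x₂ = fixedLoops K x₁' x₂' :=
  (fixedLoops_subset_of_sub_mem_lieOf h).antisymm
    (fixedLoops_subset_of_sub_mem_lieOf (by rw [← neg_sub]; exact neg_mem h))

theorem sub_mem_lieOf_of_mem_fixedLoops {x₁ x₂ x₁' x₂' : Fin n → ℝ} {γ : 𝕊 × 𝕊 → Tor n ⧸ K}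
    (hγ : γ ∈ fixedLoops K x₁ x₂) (hγ' : γ ∈ fixedLoops K x₁' x₂') :
    (x₁', x₂') - (x₁, x₂) ∈ (expPreimage K).lieOf := by
  rw [mem_fixedLoops_iff] at hγ hγ'
  have hK (s₁ s₂ : ℝ) : expT (s₁ • x₁' + s₂ • x₂' - (s₁ • x₁ + s₂ • x₂)) ∈ K :=
    mk_expT_eq_mk_expT_iff.1 (add_right_cancel ((hγ s₁ s₂).symm.trans (hγ' s₁ s₂)))
  refine fun t => ⟨?_, ?_⟩
  · show expT (t • (x₁' - x₁)) ∈ K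
    convert hK t 0 using 2
    module
  · show expT (t • (x₂' - x₂)) ∈ K
    convert hK 0 t using 2
    module

end Torus

/-- For `X = T/K`, the fixed loop spaces `(L²X)^{T(t,x)}` and
`(L²X)^{T(t',x')}` are equal if `(x₁,x₂)` and `(x₁',x₂')` lie in the same connected
component of `exp_{T×T}⁻¹(K × K)`, and are disjoint otherwise; in particular two such
fixed loop spaces intersect nontrivially only if they are equal. -/
theorem stmt_19 {n : ℕ} (K : AddSubgroup (Tor n)) (hK : IsClosed (K : Set (Tor n)))
    (x₁ x₂ x₁' x₂' : Fin n → ℝ) :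
    ((x₁', x₂') ∈ connectedComponentIn
        (exp2 (n := n) ⁻¹' ((K : Set (Tor n)) ×ˢ (K : Set (Tor n)))) (x₁, x₂) →
      fixedLoops K x₁ x₂ = fixedLoops K x₁' x₂') ∧
    ((x₁', x₂') ∉ connectedComponentIn
        (exp2 (n := n) ⁻¹' ((K : Set (Tor n)) ×ˢ (K : Set (Tor n)))) (x₁, x₂) →
      Disjoint (fixedLoops K x₁ x₂) (fixedLoops K x₁' x₂')) := by
  rw [← coe_expPreimage, AddSubgroup.mem_connectedComponentIn_iff (isClosed_expPreimage hK)]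
  refine ⟨fun h => fixedLoops_eq_of_sub_mem_lieOf h.2, fun h => ?_⟩
  exact Set.disjoint_left.2 fun γ hγ hγ' =>
    h ⟨mem_expPreimage_of_mem_fixedLoops hγ, sub_mem_lieOf_of_mem_fixedLoops hγ hγ'⟩
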